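/- arXiv:2006.09728 — 7 statements merged into one kernel-verified Lean document; each statement's English description precedes it below -/
import Mathlib

section
/- For positive reals x ≤ z and any integer p ≥ 1, d_s(x^{1/p}, z^{1/p}) ≤ d_s(x,z)^{1/p}, where d_s(a,b) = |a-b|/√(ab). -/
noncomputable def ds (x y : ℝ) : ℝ := |x - y| / Real.sqrt (x * y)

theorem ds_root_le_ds_rpow (x z : ℝ) (hx : 0 < x) (hz : 0 < z) (hxz : x ≤ z)
    (p : ℕ) (hp : 1 ≤ p) :
    ds (x ^ (1 / (p : ℝ))) (z ^ (1 / (p : ℝ))) ≤ ds x z ^ (1 / (p : ℝ)) := by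
  have hp0 : (p : ℝ) ≠ 0 := by positivity
  set u := x ^ (1 / (p : ℝ)) with hu
  set v := z ^ (1 / (p : ℝ)) with hv
  have hu0 : 0 < u := Real.rpow_pos_of_pos hx _
  have hv0 : 0 < v := Real.rpow_pos_of_pos hz _
  have huv : u ≤ v := Real.rpow_le_rpow hx.le hxz (by positivity)
  have hxu : u ^ p = x := by
    rw [hu, ← Real.rpow_natCast (x ^ (1 / (p:ℝ))) p, ← Real.rpow_mul hx.le,
      one_div, inv_mul_cancel₀ hp0, Real.rpow_one]
  have hzv : v ^ p = z := by
    rw [hv, ← Real.rpow_natCast (z ^ (1 / (p:ℝ))) p, ← Real.rpow_mul hz.le,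
      one_div, inv_mul_cancel₀ hp0, Real.rpow_one]
  have key : v - u ≤ (v ^ p - u ^ p) ^ (1 / (p : ℝ)) := by
    have h1 : (v - u) ^ p + u ^ p ≤ v ^ p := by
      have := pow_add_pow_le (sub_nonneg.2 huv) hu0.le (by omega : p ≠ 0)
      simpa [sub_add_cancel] using this
    have h2 : (v - u) ^ p ≤ v ^ p - u ^ p := by linarith
    calc v - u = ((v - u) ^ p) ^ (1 / (p : ℝ)) := by
          rw [← Real.rpow_natCast (v - u) p, ← Real.rpow_mul (by linarith),
            mul_one_div, div_self hp0, Real.rpow_one]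
      _ ≤ _ := Real.rpow_le_rpow (pow_nonneg (by linarith) p) h2 (by positivity)
  have hsub0 : 0 ≤ v ^ p - u ^ p := by
    have := pow_le_pow_left₀ hu0.le huv p
    linarith
  unfold ds
  rw [← hxu, ← hzv]
  have habs1 : |u - v| = v - u := by rw [abs_sub_comm]; exact abs_of_nonneg (by linarith)
  have habs2 : |u ^ p - v ^ p| = v ^ p - u ^ p := by
    rw [abs_sub_comm]; exact abs_of_nonneg hsub0
  rw [habs1, habs2]
  have hsqrt : (Real.sqrt (u ^ p * v ^ p)) ^ (1 / (p : ℝ)) = Real.sqrt (u * v) := by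
    rw [Real.sqrt_eq_rpow, Real.sqrt_eq_rpow, ← mul_pow,
      ← Real.rpow_natCast (u * v) p, ← Real.rpow_mul (by positivity),
      ← Real.rpow_mul (by positivity)]
    ring_nf
    rw [mul_inv_cancel₀ hp0, one_mul]
  rw [Real.div_rpow hsub0 (Real.sqrt_nonneg _), hsqrt]
  gcongr
end

section
/- For positive reals x, x', y, y', d, d', D, D': if the 'stable distances' satisfy |x-x'|/√(xx') ≤ m and |d-d'|/√(dd') ≤ m, then |(x+d)-(x'+d')|/√((x+d)(x'+d')) ≤ m. In other words, d_s(x+d, x'+d') ≤ max(d_s(x,x'), d_s(d,d')). -/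
/-!
The numerator of `ds` is subadditive by the triangle inequality, while the denominator is
superadditive by Cauchy–Schwarz: `√(x x') + √(d d') ≤ √((x + d) (x' + d'))`. Hence
`|x + d - (x' + d')| ≤ m √(x x') + m √(d d') ≤ m √((x + d) (x' + d'))`.
-/

open Real

lemma Real.sqrt_mul_add_sqrt_mul_le {a b c e : ℝ} (ha : 0 ≤ a) (hb : 0 ≤ b) (hc : 0 ≤ c)
    (he : 0 ≤ e) : √(a * b) + √(c * e) ≤ √((a + c) * (b + e)) := by
  have := sum_sqrt_mul_sqrt_le Finset.univ (f := ![a, c]) (g := ![b, e])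
    (by simp [Fin.forall_fin_two, ha, hc]) (by simp [Fin.forall_fin_two, hb, he])
  simpa only [Fin.sum_univ_two, Matrix.cons_val_zero, Matrix.cons_val_one, Matrix.head_cons,
    ← sqrt_mul ha, ← sqrt_mul hc, ← sqrt_mul (add_nonneg ha hc)] using this

lemma ds_nonneg (x y : ℝ) : 0 ≤ ds x y := by
  unfold ds
  positivity

lemma abs_sub_le_of_ds_le {x y m : ℝ} (hxy : 0 < x * y) (h : ds x y ≤ m) :
    |x - y| ≤ m * √(x * y) :=
  (div_le_iff₀ (sqrt_pos.2 hxy)).1 h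

lemma ds_add_le {x x' d d' m : ℝ} (hx : 0 < x) (hx' : 0 < x') (hd : 0 < d) (hd' : 0 < d')
    (h1 : ds x x' ≤ m) (h2 : ds d d' ≤ m) : ds (x + d) (x' + d') ≤ m := by
  have hm : 0 ≤ m := (ds_nonneg x x').trans h1
  rw [ds, div_le_iff₀ (by positivity)]
  calc |x + d - (x' + d')| = |(x - x') + (d - d')| := by ring_nf
    _ ≤ |x - x'| + |d - d'| := abs_add_le _ _
    _ ≤ m * √(x * x') + m * √(d * d') :=
      add_le_add (abs_sub_le_of_ds_le (by positivity) h1) (abs_sub_le_of_ds_le (by positivity) h2)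
    _ = m * (√(x * x') + √(d * d')) := (mul_add _ _ _).symm
    _ ≤ m * √((x + d) * (x' + d')) :=
      mul_le_mul_of_nonneg_left (sqrt_mul_add_sqrt_mul_le hx.le hx'.le hd.le hd'.le) hm

theorem ds_add_le_max (x x' d d' : ℝ) (hx : 0 < x) (hx' : 0 < x') (hd : 0 < d) (hd' : 0 < d')
    (m : ℝ) (h1 : ds x x' ≤ m) (h2 : ds d d' ≤ m) :
    ds (x + d) (x' + d') ≤ m ∧ ds (x + d) (x' + d') ≤ max (ds x x') (ds d d') :=
  ⟨ds_add_le hx hx' hd hd' h1 h2, ds_add_le hx hx' hd hd' (le_max_left _ _) (le_max_right _ _)⟩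
end

section
/- Let f : ℝ⁺ → ℝ⁺. Then f is 1-Lipschitz for the stable semi-metric (i.e., |f(x)-f(y)|/√(f(x)f(y)) ≤ |x-y|/√(xy) for all x,y > 0) if and only if x ↦ f(x)/x is non-increasing and x ↦ x·f(x) is non-decreasing. -/
lemma ds_key (x y a b : ℝ) (hx : 0 < x) (hxy : x ≤ y) (ha : 0 < a) (hb : 0 < b) :
    ds a b ≤ ds x y ↔ (x * a ≤ y * b ∧ x * b ≤ y * a) := by
  have hy : 0 < y := hx.trans_le hxy
  have hab : 0 < a * b := mul_pos ha hb
  have hxy' : 0 < x * y := mul_pos hx hy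
  have s1 : (0:ℝ) < Real.sqrt (a * b) := Real.sqrt_pos.mpr hab
  have s2 : (0:ℝ) < Real.sqrt (x * y) := Real.sqrt_pos.mpr hxy'
  unfold ds
  rw [div_le_div_iff₀ s1 s2]
  constructor
  · intro h
    have h2 : (|a - b| * Real.sqrt (x * y)) ^ 2 ≤ (|x - y| * Real.sqrt (a * b)) ^ 2 :=
      pow_le_pow_left₀ (by positivity) h 2
    rw [mul_pow, mul_pow, sq_abs, sq_abs, Real.sq_sqrt hab.le, Real.sq_sqrt hxy'.le] at h2
    have hsum : 0 ≤ (y - x) * (a + b) :=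
      mul_nonneg (sub_nonneg.mpr hxy) (by linarith)
    constructor
    · by_contra hc
      push_neg at hc
      rcases lt_or_ge (x * b) (y * a) with h3 | h3
      · nlinarith [mul_pos (sub_pos.mpr hc) (sub_pos.mpr h3)]
      · linarith
    · by_contra hc
      push_neg at hc
      rcases lt_or_ge (x * a) (y * b) with h3 | h3
      · nlinarith [mul_pos (sub_pos.mpr hc) (sub_pos.mpr h3)]
      · linarith
  · rintro ⟨h1, h2⟩
    apply le_of_pow_le_pow_left₀ two_ne_zero (by positivity)
    rw [mul_pow, mul_pow, sq_abs, sq_abs, Real.sq_sqrt hab.le, Real.sq_sqrt hxy'.le]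
    nlinarith [mul_nonneg (sub_nonneg.mpr h1) (sub_nonneg.mpr h2)]

lemma ds_comm (a b : ℝ) : ds a b = ds b a := by
  unfold ds; rw [abs_sub_comm, mul_comm]

theorem stable_iff_submonotone (f : ℝ → ℝ) (hf : ∀ x, 0 < x → 0 < f x) :
    (∀ x y, 0 < x → 0 < y → ds (f x) (f y) ≤ ds x y) ↔
      ((∀ x y, 0 < x → x ≤ y → f y / y ≤ f x / x) ∧
       (∀ x y, 0 < x → x ≤ y → x * f x ≤ y * f y)) := by
  constructor
  · intro H
    constructor
    · intro x y hx hxy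
      have hy : 0 < y := hx.trans_le hxy
      have h := (ds_key x y (f x) (f y) hx hxy (hf x hx) (hf y hy)).mp (H x y hx hy)
      rw [div_le_div_iff₀ hy hx]
      linarith [h.2]
    · intro x y hx hxy
      have hy : 0 < y := hx.trans_le hxy
      exact ((ds_key x y (f x) (f y) hx hxy (hf x hx) (hf y hy)).mp (H x y hx hy)).1
  · rintro ⟨h1, h2⟩ x y hx hy
    rcases le_total x y with hxy | hxy
    · apply (ds_key x y (f x) (f y) hx hxy (hf x hx) (hf y hy)).mpr
      refine ⟨h2 x y hx hxy, ?_⟩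
      have := h1 x y hx hxy
      rw [div_le_div_iff₀ hy hx] at this
      linarith
    · rw [ds_comm (f x) (f y), ds_comm x y]
      apply (ds_key y x (f y) (f x) hy hxy (hf y hy) (hf x hx)).mpr
      refine ⟨h2 y x hy hxy, ?_⟩
      have := h1 y x hy hxy
      rw [div_le_div_iff₀ hx hy] at this
      linarith
end

section
/- Any mapping f : 𝒟ₙ⁺ → 𝒟ₙ⁺ that is contracting for the stable semi-metric d_s (i.e., λ-Lipschitz with λ < 1) admits a unique fixed point Δ* ∈ 𝒟ₙ⁺ with Δ* = f(Δ*). -/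
/-!
In logarithmic coordinates `Δ = exp ∘ x` the stable semi-metric becomes
`d_s(exp ∘ x, exp ∘ y) = max_i 2 sinh (|x i - y i| / 2)`, which lies between the sup distance
`‖x - y‖∞` and `2 sinh (‖x - y‖∞ / 2)`. Hence Banach's iteration argument works for the conjugate
map `log ∘ f ∘ exp` on the complete space `Fin n → ℝ`: successive `d_s`-distances decay
geometrically, so do the sup distances, and continuity of `d_s` at the diagonal makes the limit a
fixed point. The triangle inequality, which `d_s` violates, is never needed.
-/

noncomputable def dsn {n : ℕ} (Δ Δ' : Fin n → ℝ) : ℝ :=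
  ⨆ i, |Δ i - Δ' i| / Real.sqrt (Δ i * Δ' i)

open Filter Topology Real

theorem existsUnique_fixedPoint_of_contracting_majorant {X : Type*} [MetricSpace X]
    [CompleteSpace X] [Nonempty X] (g : X → X) (D : X → X → ℝ)
    (hdist : ∀ x y, dist x y ≤ D x y) (hD : ∀ x, Tendsto (D x) (𝓝 x) (𝓝 0))
    {K : ℝ} (hK0 : 0 ≤ K) (hK : K < 1) (hg : ∀ x y, D (g x) (g y) ≤ K * D x y) :
    ∃! x, g x = x := by
  obtain ⟨x₀⟩ := ‹Nonempty X›
  set u : ℕ → X := fun k => g^[k] x₀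
  have hu_succ : ∀ k, u (k + 1) = g (u k) := fun k => Function.iterate_succ_apply' g k x₀
  have hstep : ∀ k, D (u k) (u (k + 1)) ≤ D x₀ (g x₀) * K ^ k := by
    intro k
    induction k with
    | zero => simp [u]
    | succ k ih =>
      calc D (u (k + 1)) (u (k + 1 + 1)) ≤ K * D (u k) (u (k + 1)) := by
            simpa only [hu_succ] using hg (u k) (u (k + 1))
        _ ≤ K * (D x₀ (g x₀) * K ^ k) := by gcongr
        _ = D x₀ (g x₀) * K ^ (k + 1) := by ring
  obtain ⟨p, hp⟩ := cauchySeq_tendsto_of_complete <|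
    cauchySeq_of_le_geometric K _ hK fun k => (hdist _ _).trans (hstep k)
  have hfix : g p = p := by
    have hgp : Tendsto (fun k => u (k + 1)) atTop (𝓝 (g p)) := by
      rw [tendsto_iff_dist_tendsto_zero]
      have hlim : Tendsto (fun k => K * D p (u k)) atTop (𝓝 0) := by
        simpa using ((hD p).comp hp).const_mul K
      refine squeeze_zero (fun _ => dist_nonneg) (fun k => ?_) hlim
      rw [hu_succ, dist_comm]
      exact (hdist _ _).trans (hg _ _)
    exact tendsto_nhds_unique hgp (hp.comp (tendsto_add_atTop_nat 1))
  refine ⟨p, hfix, fun q hq => ?_⟩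
  have hDqp : D q p ≤ K * D q p := by simpa only [hq, hfix] using hg q p
  have hDqp_nonneg : 0 ≤ D q p := dist_nonneg.trans (hdist q p)
  exact dist_le_zero.mp ((hdist q p).trans (by nlinarith))

theorem Real.abs_exp_sub_exp_div_sqrt_mul (u v : ℝ) :
    |exp u - exp v| / √(exp u * exp v) = 2 * sinh (|u - v| / 2) := by
  have hmid : √(exp u * exp v) = exp ((u + v) / 2) := by rw [← exp_add, exp_half]
  have hdiff : exp u - exp v = exp ((u + v) / 2) * (2 * sinh ((u - v) / 2)) := by
    rw [sinh_eq, mul_div_cancel₀ _ two_ne_zero, mul_sub, ← exp_add, ← exp_add]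
    ring_nf
  rw [hmid, hdiff, abs_mul, abs_of_pos (exp_pos _), mul_div_cancel_left₀ _ (exp_pos _).ne',
    abs_mul, abs_two, abs_sinh, abs_div, abs_two]

section LogCoordinates

variable {n : ℕ}

theorem dsn_exp_comp (x y : Fin n → ℝ) :
    dsn (exp ∘ x) (exp ∘ y) = ⨆ i, 2 * sinh (|x i - y i| / 2) := by
  simp only [dsn, Function.comp_apply, abs_exp_sub_exp_div_sqrt_mul]

theorem dist_le_dsn_exp_comp (x y : Fin n → ℝ) : dist x y ≤ dsn (exp ∘ x) (exp ∘ y) := by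
  rw [dsn_exp_comp]
  have hterm : ∀ i, dist (x i) (y i) ≤ 2 * sinh (|x i - y i| / 2) := fun i => by
    have := self_le_sinh_iff.mpr (by positivity : 0 ≤ |x i - y i| / 2)
    rw [Real.dist_eq]; linarith
  refine (dist_pi_le_iff (Real.iSup_nonneg fun i => dist_nonneg.trans (hterm i))).mpr
    fun i => (hterm i).trans ?_
  exact le_ciSup (f := fun i => 2 * sinh (|x i - y i| / 2)) (Set.finite_range _).bddAbove i

theorem dsn_exp_comp_le (x y : Fin n → ℝ) :
    dsn (exp ∘ x) (exp ∘ y) ≤ 2 * sinh (dist x y / 2) := by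
  rw [dsn_exp_comp]
  refine Real.iSup_le (fun i => ?_) (mul_nonneg two_pos.le (sinh_nonneg_iff.mpr (by positivity)))
  gcongr 2 * ?_
  refine sinh_le_sinh.mpr ?_
  gcongr
  exact (Real.dist_eq _ _).symm.trans_le (dist_le_pi_dist x y i)

theorem tendsto_dsn_exp_comp (x : Fin n → ℝ) :
    Tendsto (fun y => dsn (exp ∘ x) (exp ∘ y)) (𝓝 x) (𝓝 0) := by
  have hbound : Tendsto (fun y => 2 * sinh (dist x y / 2)) (𝓝 x) (𝓝 0) := by
    have hcont : Continuous fun y => 2 * sinh (dist x y / 2) :=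
      (continuous_sinh.comp ((continuous_const.dist continuous_id).div_const 2)).const_mul 2
    simpa using hcont.tendsto x
  exact squeeze_zero (fun y => dist_nonneg.trans (dist_le_dsn_exp_comp x y))
    (dsn_exp_comp_le x) hbound

end LogCoordinates

theorem fixed_point_of_contracting_stable_general {n : ℕ}
    (f : (Fin n → ℝ) → (Fin n → ℝ))
    (hfpos : ∀ Δ, (∀ i, 0 < Δ i) → ∀ i, 0 < f Δ i)
    (lam : ℝ) (hlam : lam < 1)
    (hlip : ∀ Δ Δ', (∀ i, 0 < Δ i) → (∀ i, 0 < Δ' i) →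
      dsn (f Δ) (f Δ') ≤ lam * dsn Δ Δ') :
    ∃! Δstar : Fin n → ℝ, (∀ i, 0 < Δstar i) ∧ f Δstar = Δstar := by
  have exp_log_comp : ∀ Δ : Fin n → ℝ, (∀ i, 0 < Δ i) → exp ∘ (log ∘ Δ) = Δ :=
    fun Δ hΔ => funext fun i => exp_log (hΔ i)
  have hf_exp : ∀ x, exp ∘ (log ∘ f (exp ∘ x)) = f (exp ∘ x) :=
    fun x => exp_log_comp _ (hfpos _ fun i => exp_pos (x i))
  obtain ⟨L, hL, hL_unique⟩ := existsUnique_fixedPoint_of_contracting_majorant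
    (fun x => log ∘ f (exp ∘ x)) (fun x y => dsn (exp ∘ x) (exp ∘ y))
    dist_le_dsn_exp_comp tendsto_dsn_exp_comp (le_max_right lam 0) (max_lt hlam one_pos)
    fun x y => by
      simp only [hf_exp]
      refine (hlip _ _ (fun i => exp_pos (x i)) (fun i => exp_pos (y i))).trans ?_
      exact mul_le_mul_of_nonneg_right (le_max_left _ _)
        (dist_nonneg.trans (dist_le_dsn_exp_comp x y))
  have hfix : f (exp ∘ L) = exp ∘ L := by
    conv_rhs => rw [← hL]
    exact (hf_exp L).symm
  refine ⟨exp ∘ L, ⟨fun i => exp_pos (L i), hfix⟩, fun Δ ⟨hΔ, hfΔ⟩ => ?_⟩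
  rw [← exp_log_comp Δ hΔ, ← hL_unique (log ∘ Δ) (by simp only [exp_log_comp Δ hΔ, hfΔ])]

theorem fixed_point_of_contracting_stable {n : ℕ} (hn : 0 < n)
    (f : (Fin n → ℝ) → (Fin n → ℝ))
    (hfpos : ∀ Δ, (∀ i, 0 < Δ i) → ∀ i, 0 < f Δ i)
    (lam : ℝ) (hlam0 : 0 ≤ lam) (hlam : lam < 1)
    (hlip : ∀ Δ Δ', (∀ i, 0 < Δ i) → (∀ i, 0 < Δ' i) →
      dsn (f Δ) (f Δ') ≤ lam * dsn Δ Δ') :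
    ∃! Δstar : Fin n → ℝ, (∀ i, 0 < Δstar i) ∧ f Δstar = Δstar :=
  fixed_point_of_contracting_stable_general f hfpos lam hlam hlip
end

section
/- The semi-metric space (𝒟ₙ⁺, d_s) is complete: every d_s-Cauchy sequence of positive diagonal matrices converges (for d_s) to a positive diagonal matrix. -/
lemma coord_le_dsn {n : ℕ} (Δ Δ' : Fin n → ℝ) (i : Fin n) :
    |Δ i - Δ' i| / Real.sqrt (Δ i * Δ' i) ≤ dsn Δ Δ' :=
  le_ciSup (Set.Finite.bddAbove
    (Set.finite_range (fun j => |Δ j - Δ' j| / Real.sqrt (Δ j * Δ' j)))) i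

lemma quad_bound {x c : ℝ} (hx : 0 < x) (hc : 0 < c)
    (h : x - c ≤ Real.sqrt (x * c)) : x ≤ 4 * c := by
  have hs : Real.sqrt (x * c) ^ 2 = x * c := Real.sq_sqrt (by positivity)
  have hs0 : 0 ≤ Real.sqrt (x * c) := Real.sqrt_nonneg _
  nlinarith [sq_nonneg (x - c), sq_nonneg (Real.sqrt (x*c) - x + c), sq_nonneg (x - 4*c)]

theorem stable_semimetric_complete {n : ℕ} (hn : 0 < n)
    (Δ : ℕ → Fin n → ℝ) (hpos : ∀ k i, 0 < Δ k i)
    (hcauchy : ∀ ε : ℝ, 0 < ε → ∃ K, ∀ p q, K ≤ p → K ≤ q → dsn (Δ p) (Δ q) ≤ ε) :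
    ∃ L : Fin n → ℝ, (∀ i, 0 < L i) ∧
      ∀ ε : ℝ, 0 < ε → ∃ K, ∀ k, K ≤ k → dsn (Δ k) L ≤ ε := by
  have hne : Nonempty (Fin n) := ⟨⟨0, hn⟩⟩
  obtain ⟨K₀, hK₀⟩ := hcauchy 1 one_pos
  set c : Fin n → ℝ := Δ K₀ with hc
  have hcpos : ∀ i, 0 < c i := hpos K₀
  have key : ∀ p q, ∀ i : Fin n,
      |Δ p i - Δ q i| ≤ dsn (Δ p) (Δ q) * Real.sqrt (Δ p i * Δ q i) := by
    intro p q i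
    have hsq : 0 < Real.sqrt (Δ p i * Δ q i) :=
      Real.sqrt_pos.2 (mul_pos (hpos p i) (hpos q i))
    exact (div_le_iff₀ hsq).mp (coord_le_dsn (Δ p) (Δ q) i)
  -- upper bound Δ p i ≤ 4 c i for p ≥ K₀
  have hub : ∀ p, K₀ ≤ p → ∀ i, Δ p i ≤ 4 * c i := by
    intro p hp i
    have h1 : |Δ p i - c i| ≤ 1 * Real.sqrt (Δ p i * c i) := by
      calc |Δ p i - c i| ≤ dsn (Δ p) (Δ K₀) * Real.sqrt (Δ p i * c i) := key p K₀ i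
        _ ≤ 1 * Real.sqrt (Δ p i * c i) := by
            apply mul_le_mul_of_nonneg_right (hK₀ p K₀ hp le_rfl) (Real.sqrt_nonneg _)
    apply quad_bound (hpos p i) (hcpos i)
    have := abs_le.mp h1
    linarith [this.2]
  have hlb : ∀ p, K₀ ≤ p → ∀ i, c i / 4 ≤ Δ p i := by
    intro p hp i
    have h1 : |Δ p i - c i| ≤ 1 * Real.sqrt (Δ p i * c i) := by
      calc |Δ p i - c i| ≤ dsn (Δ p) (Δ K₀) * Real.sqrt (Δ p i * c i) := key p K₀ i
        _ ≤ 1 * Real.sqrt (Δ p i * c i) := by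
            apply mul_le_mul_of_nonneg_right (hK₀ p K₀ hp le_rfl) (Real.sqrt_nonneg _)
    have h2 : c i - Δ p i ≤ Real.sqrt (c i * Δ p i) := by
      rw [mul_comm]
      have := abs_le.mp h1
      linarith [this.1]
    have := quad_bound (hcpos i) (hpos p i) h2
    linarith
  -- each coordinate is Cauchy
  have hcc : ∀ i : Fin n, CauchySeq (fun k => Δ k i) := by
    intro i
    rw [Metric.cauchySeq_iff]
    intro ε hε
    have h8 : 0 < ε / (8 * c i) := div_pos hε (by linarith [hcpos i])
    obtain ⟨K₁, hK₁⟩ := hcauchy (ε / (8 * c i)) h8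
    refine ⟨max K₀ K₁, fun p hp q hq => ?_⟩
    have hp0 := le_trans (le_max_left _ _) hp
    have hq0 := le_trans (le_max_left _ _) hq
    have hsq : Real.sqrt (Δ p i * Δ q i) ≤ 4 * c i := by
      rw [show (4 * c i) = Real.sqrt ((4 * c i) * (4 * c i)) by
        rw [Real.sqrt_mul_self (by linarith [hcpos i])]]
      apply Real.sqrt_le_sqrt
      have := hub p hp0 i; have := hub q hq0 i
      nlinarith [hpos p i, hpos q i, hcpos i]
    calc dist (Δ p i) (Δ q i) = |Δ p i - Δ q i| := Real.dist_eq _ _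
      _ ≤ dsn (Δ p) (Δ q) * Real.sqrt (Δ p i * Δ q i) := key p q i
      _ ≤ (ε / (8 * c i)) * (4 * c i) := by
          apply mul_le_mul (hK₁ p q (le_trans (le_max_right _ _) hp)
            (le_trans (le_max_right _ _) hq)) hsq (Real.sqrt_nonneg _) (le_of_lt h8)
      _ = ε / 2 := by
          have : c i ≠ 0 := ne_of_gt (hcpos i)
          field_simp
          ring
      _ < ε := by linarith
  have hlim : ∀ i : Fin n, ∃ l : ℝ, Filter.Tendsto (fun k => Δ k i) Filter.atTop (nhds l) :=
    fun i => cauchySeq_tendsto_of_complete (hcc i)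
  choose L hL using hlim
  have hLlb : ∀ i, c i / 4 ≤ L i := by
    intro i
    apply ge_of_tendsto (hL i)
    filter_upwards [Filter.eventually_atTop.2 ⟨K₀, fun k hk => hlb k hk i⟩] with k hk using hk
  have hLpos : ∀ i, 0 < L i := fun i => lt_of_lt_of_le (by linarith [hcpos i]) (hLlb i)
  refine ⟨L, hLpos, ?_⟩
  intro ε hε
  have hNi : ∀ i : Fin n, ∃ N, ∀ k, N ≤ k → |Δ k i - L i| ≤ ε * (c i / 4) := by
    intro i
    have := (Metric.tendsto_atTop.mp (hL i)) (ε * (c i / 4)) (mul_pos hε (by linarith [hcpos i]))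
    obtain ⟨N, hN⟩ := this
    exact ⟨N, fun k hk => le_of_lt (by simpa [Real.dist_eq] using hN k hk)⟩
  choose N hN using hNi
  refine ⟨max K₀ (Finset.univ.sup N), fun k hk => ?_⟩
  have hk0 : K₀ ≤ k := le_trans (le_max_left _ _) hk
  apply ciSup_le
  intro i
  have hki : N i ≤ k :=
    le_trans (le_trans (Finset.le_sup (Finset.mem_univ i)) (le_max_right _ _)) hk
  have hsq : c i / 4 ≤ Real.sqrt (Δ k i * L i) := by
    rw [show (c i / 4) = Real.sqrt ((c i / 4) * (c i / 4)) by
      rw [Real.sqrt_mul_self (by linarith [hcpos i])]]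
    apply Real.sqrt_le_sqrt
    have h1 := hlb k hk0 i
    have h2 := hLlb i
    nlinarith [hcpos i]
  have hsqpos : 0 < Real.sqrt (Δ k i * L i) :=
    Real.sqrt_pos.2 (mul_pos (hpos k i) (hLpos i))
  rw [div_le_iff₀ hsqpos]
  calc |Δ k i - L i| ≤ ε * (c i / 4) := hN i k hki
    _ ≤ ε * Real.sqrt (Δ k i * L i) := mul_le_mul_of_nonneg_left hsq (le_of_lt hε)
end

section
/- Let u : ℝ⁺ → ℝ⁺ be stable (t ↦ tu(t) non-decreasing, t ↦ u(t)/t non-increasing) and bounded by u^∞. Then for every x > 0, the equation η = 1/(1/x + u(η)) admits a unique solution η(x) > 0, and the map η : ℝ⁺ → ℝ⁺ is stable. -/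
theorem eta_exists_unique_and_stable (u : ℝ → ℝ) (uinf : ℝ)
    (hupos : ∀ t, 0 < t → 0 < u t)
    (hbound : ∀ t, 0 < t → u t ≤ uinf)
    (hmul : ∀ s t, 0 < s → s ≤ t → s * u s ≤ t * u t)
    (hdiv : ∀ s t, 0 < s → s ≤ t → u t / t ≤ u s / s) :
    (∀ x, 0 < x → ∃! e : ℝ, 0 < e ∧ e = 1 / (1 / x + u e)) ∧
    (∀ η : ℝ → ℝ, (∀ x, 0 < x → 0 < η x ∧ η x = 1 / (1 / x + u (η x))) →
      (∀ x y, 0 < x → x ≤ y → η y / y ≤ η x / x) ∧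
      (∀ x y, 0 < x → x ≤ y → x * η x ≤ y * η y)) := by
  have huinf : 0 < uinf := lt_of_lt_of_le (hupos 1 one_pos) (hbound 1 one_pos)
  constructor
  · intro x hx
    have hxinv : 0 < 1 / x := by positivity
    obtain ⟨S, hS⟩ : ∃ S : Set ℝ, S = {e | 0 < e ∧ e / x + e * u e ≤ 1} := ⟨_, rfl⟩
    have hmem : ∀ e, e ∈ S ↔ (0 < e ∧ e / x + e * u e ≤ 1) := by
      intro e; rw [hS]; rfl
    have hD : 0 < 1 / x + uinf := by linarith
    have he0 : (0:ℝ) < 1 / (2 * (1 / x + uinf)) := by positivity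
    have he0S : 1 / (2 * (1 / x + uinf)) ∈ S := by
      rw [hmem]
      refine ⟨he0, ?_⟩
      have hb := hbound _ he0
      obtain ⟨e, hedef⟩ : ∃ e : ℝ, e = 1 / (2 * (1 / x + uinf)) := ⟨_, rfl⟩
      rw [← hedef] at he0 hb ⊢
      have h2 : e * (1 / x + uinf) = 1/2 := by
        rw [hedef]; field_simp
      have h3 : e * u e ≤ e * uinf := by nlinarith
      have h4 : e / x = e * (1/x) := by ring
      nlinarith
    have hub : ∀ e ∈ S, e ≤ x := by
      intro e he
      obtain ⟨hep, hle⟩ := (hmem e).mp he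
      have h1 : 0 ≤ e * u e := le_of_lt (mul_pos hep (hupos e hep))
      have : e / x ≤ 1 := by linarith
      exact (div_le_one hx).mp this
    have hbdd : BddAbove S := ⟨x, hub⟩
    obtain ⟨E, hE⟩ : ∃ E : ℝ, E = sSup S := ⟨_, rfl⟩
    have hE0 : 1 / (2 * (1 / x + uinf)) ≤ E := hE ▸ le_csSup hbdd he0S
    have hEpos : 0 < E := lt_of_lt_of_le he0 hE0
    have hEub : ∀ e ∈ S, e ≤ E := fun e he => hE ▸ le_csSup hbdd he
    have hcE : 0 < u E := hupos E hEpos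
    obtain ⟨c, hc⟩ : ∃ c : ℝ, c = u E / E := ⟨_, rfl⟩
    have hcpos : 0 < c := hc ▸ div_pos hcE hEpos
    have hEc : E * u E = E * E * c := by
      rw [hc]; field_simp
    have lemA : ∀ e, 0 < e → e ≤ E → e * e * c ≤ e * u e := by
      intro e hep heE
      have h := hdiv e E hep heE
      rw [hc]
      calc e * e * (u E / E) ≤ e * e * (u e / e) := by nlinarith
        _ = e * u e := by field_simp
    have lemB : ∀ e, E ≤ e → e * u e ≤ e * e * c := by
      intro e heE
      have hep : 0 < e := lt_of_lt_of_le hEpos heE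
      have h := hdiv E e hEpos heE
      rw [hc]
      calc e * u e = e * e * (u e / e) := by field_simp
        _ ≤ e * e * (u E / E) := by nlinarith
    -- Step 1: E/x + E u E ≤ 1
    have hG1 : E / x + E * u E ≤ 1 := by
      by_contra hcon
      push_neg at hcon
      obtain ⟨D, hDdef⟩ : ∃ D : ℝ, D = 1 / x + 2 * E * c := ⟨_, rfl⟩
      have hDpos : 0 < D := by rw [hDdef]; positivity
      obtain ⟨δ, hδdef⟩ : ∃ d : ℝ,
          d = min (E / 2) ((E / x + E * u E - 1) / (2 * D)) := ⟨_, rfl⟩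
      have hδpos : 0 < δ := by
        rw [hδdef]
        exact lt_min (by linarith) (div_pos (by linarith) (by linarith))
      have hδE : δ ≤ E / 2 := hδdef ▸ min_le_left _ _
      have hδG : δ ≤ (E / x + E * u E - 1) / (2 * D) := hδdef ▸ min_le_right _ _
      have hδ2D : δ * (2 * D) ≤ E / x + E * u E - 1 :=
        (le_div_iff₀ (by linarith)).mp hδG
      have hlt' : E - δ < sSup S := by rw [← hE]; linarith
      obtain ⟨e, heS, hlt⟩ := exists_lt_of_lt_csSup ⟨_, he0S⟩ hlt'
      obtain ⟨hep, hele⟩ := (hmem e).mp heS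
      have heE : e ≤ E := hEub e heS
      have hA := lemA e hep heE
      have h1 : e / x + e * e * c ≤ 1 := by linarith
      have h2 : E - δ ≤ e := hlt.le
      have hex : (E - δ) / x ≤ e / x := by gcongr
      have hesq : (E - δ) * (E - δ) * c ≤ e * e * c := by
        have h0 : (0:ℝ) ≤ E - δ := by linarith
        exact mul_le_mul_of_nonneg_right (mul_self_le_mul_self h0 h2) hcpos.le
      have e1 : (E - δ) / x = E / x - δ * (1/x) := by ring
      have e2 : (E - δ) * (E - δ) * c = E * E * c - 2 * (δ * (E * c)) + δ * δ * c := by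
        ring
      have e3 : 0 ≤ δ * δ * c := by positivity
      have e4 : δ * (2 * D) = 2 * (δ * (1/x)) + 4 * (δ * (E * c)) := by
        rw [hDdef]; ring
      linarith
    -- Step 2: 1 ≤ E/x + E u E
    have hG2 : 1 ≤ E / x + E * u E := by
      by_contra hcon
      push_neg at hcon
      obtain ⟨D, hDdef⟩ : ∃ D : ℝ, D = 1 / x + 3 * E * c := ⟨_, rfl⟩
      have hDpos : 0 < D := by rw [hDdef]; positivity
      obtain ⟨δ, hδdef⟩ : ∃ d : ℝ,
          d = min E ((1 - (E / x + E * u E)) / (2 * D)) := ⟨_, rfl⟩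
      have hδpos : 0 < δ := by
        rw [hδdef]
        exact lt_min hEpos (div_pos (by linarith) (by linarith))
      have hδE : δ ≤ E := hδdef ▸ min_le_left _ _
      have hδG : δ ≤ (1 - (E / x + E * u E)) / (2 * D) := hδdef ▸ min_le_right _ _
      have hδ2D : δ * (2 * D) ≤ 1 - (E / x + E * u E) :=
        (le_div_iff₀ (by linarith)).mp hδG
      obtain ⟨e, hedef⟩ : ∃ e : ℝ, e = E + δ := ⟨_, rfl⟩
      have hep : 0 < e := by rw [hedef]; linarith
      have hB := lemB e (by rw [hedef]; linarith)
      have e1 : e / x = E / x + δ * (1/x) := by rw [hedef]; ring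
      have e2 : e * e * c = E * E * c + 2 * (δ * (E * c)) + δ * δ * c := by
        rw [hedef]; ring
      have e3 : δ * δ * c ≤ δ * (E * c) := by
        rw [show δ * (E * c) = δ * E * c by ring]
        exact mul_le_mul_of_nonneg_right
          (mul_le_mul_of_nonneg_left hδE hδpos.le) hcpos.le
      have e4 : δ * (2 * D) = 2 * (δ * (1/x)) + 6 * (δ * (E * c)) := by
        rw [hDdef]; ring
      have hgood : e / x + e * u e ≤ 1 := by linarith
      have : e ≤ E := hEub e ((hmem e).mpr ⟨hep, hgood⟩)
      rw [hedef] at this; linarith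
    have hGeq : E / x + E * u E = 1 := le_antisymm hG1 hG2
    have hdE : 0 < 1 / x + u E := by linarith
    refine ⟨E, ⟨hEpos, ?_⟩, ?_⟩
    · rw [eq_div_iff hdE.ne']
      linear_combination hGeq
    · rintro y ⟨hyp, hyeq⟩
      have hdy : 0 < 1 / x + u y := by
        have := hupos y hyp; linarith
      rw [eq_div_iff hdy.ne'] at hyeq
      have hy1 : y / x + y * u y = 1 := by
        linear_combination hyeq
      rcases lt_trichotomy y E with h | h | h
      · exfalso
        have h1 : y / x < E / x := by gcongr
        have h2 : y * u y ≤ E * u E := hmul y E hyp h.le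
        linarith
      · exact h
      · exfalso
        have h1 : E / x < y / x := by gcongr
        have h2 : E * u E ≤ y * u y := hmul E y hEpos h.le
        linarith
  · intro η hη
    have key : ∀ x, 0 < x → η x / x + η x * u (η x) = 1 := by
      intro x hx
      obtain ⟨hp, he⟩ := hη x hx
      have hd : 0 < 1 / x + u (η x) := by
        have h1 : 0 < 1 / x := by positivity
        have := hupos _ hp; linarith
      rw [eq_div_iff hd.ne'] at he
      linear_combination he
    have mono : ∀ x y, 0 < x → x ≤ y → η x ≤ η y := by
      intro x y hx hxy
      have hy : 0 < y := lt_of_lt_of_le hx hxy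
      by_contra hcon
      push_neg at hcon
      have h1 := key x hx
      have h2 := key y hy
      have hpx := (hη x hx).1
      have hpy := (hη y hy).1
      have h3 : η y * u (η y) ≤ η x * u (η x) := hmul (η y) (η x) hpy hcon.le
      have h4 : η x / x ≤ η y / y := by linarith
      have h5 : η y / y < η x / x := by
        rw [div_lt_div_iff₀ hy hx]
        nlinarith
      linarith
    constructor
    · intro x y hx hxy
      have hy : 0 < y := lt_of_lt_of_le hx hxy
      have h1 := key x hx
      have h2 := key y hy
      have h3 : η x * u (η x) ≤ η y * u (η y) :=
        hmul (η x) (η y) (hη x hx).1 (mono x y hx hxy)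
      linarith
    · intro x y hx hxy
      have hy : 0 < y := lt_of_lt_of_le hx hxy
      exact mul_le_mul hxy (mono x y hx hxy) (hη x hx).1.le hy.le
end

section
/- Let γ > 0, S₁,…,Sₙ symmetric PSD p×p matrices, and for Δ ∈ 𝒟ₙ⁺ define Q(Δ) = ((1/n)∑_j Δ_j S_j + γ I_p)⁻¹ and I(Δ)_i = (1/n)tr(S_i Q(Δ)). Then for all Δ, Δ' ∈ 𝒟ₙ⁺ with each I(Δ)_i, I(Δ')_i > 0: max_i |I(Δ)_i − I(Δ')_i|/√(I(Δ)_i I(Δ')_i) ≤ max(‖I_p − γQ(Δ)‖, ‖I_p − γQ(Δ')‖) · max_j |Δ_j − Δ'_j|/√(Δ_j Δ'_j). -/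
/-!
Write `Q = Q(Δ)`, `Q' = Q(Δ')` and let `ε` be the supremum on the right. The resolvent identity
gives `I(Δ)ᵢ - I(Δ')ᵢ = n⁻² ∑ⱼ (Δ'ⱼ - Δⱼ) tr(Sᵢ Q Sⱼ Q')`. For PSD `Sᵢ, Sⱼ` the form
`(X, Y) ↦ tr(Sᵢ X Sⱼ Y)` is a semi-inner product on symmetric matrices (it is the Frobenius
product of `√Sⱼ X √Sᵢ` and `√Sⱼ Y √Sᵢ`), so `|tr(Sᵢ Q Sⱼ Q')| ≤ √(aⱼ bⱼ)` with
`aⱼ = tr(Sᵢ Q Sⱼ Q)`, `bⱼ = tr(Sᵢ Q' Sⱼ Q')`. Bounding `|Δⱼ - Δ'ⱼ|` by `ε √(Δⱼ Δ'ⱼ)` and applying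
Cauchy–Schwarz to the sum over `j` leaves `ε √(∑ Δⱼ aⱼ) √(∑ Δ'ⱼ bⱼ)`. Since
`∑ⱼ Δⱼ Sⱼ = n (Q⁻¹ - γ I)`, we get `∑ⱼ Δⱼ aⱼ = n tr(Sᵢ √Q (I - γQ) √Q) ≤ n ‖I - γQ‖ tr(Sᵢ Q)`,
and `tr(Sᵢ Q) = n I(Δ)ᵢ`.
-/

/-- Spectral (ℓ²-operator) norm of a real square matrix. -/
noncomputable def specNorm {p : ℕ} (M : Matrix (Fin p) (Fin p) ℝ) : ℝ :=
  ‖Matrix.toEuclideanCLM (𝕜 := ℝ) M‖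

/-- The resolvent `Q(Δ) = ((1/n) ∑ⱼ Δⱼ Sⱼ + γ Iₚ)⁻¹`. -/
noncomputable def resolv {p n : ℕ} (γ : ℝ) (S : Fin n → Matrix (Fin p) (Fin p) ℝ)
    (Δ : Fin n → ℝ) : Matrix (Fin p) (Fin p) ℝ :=
  ((n : ℝ)⁻¹ • ∑ j, Δ j • S j + γ • (1 : Matrix (Fin p) (Fin p) ℝ))⁻¹

/-- `I(Δ)ᵢ = (1/n) tr(Sᵢ Q(Δ))`. -/
noncomputable def Ifun {p n : ℕ} (γ : ℝ) (S : Fin n → Matrix (Fin p) (Fin p) ℝ)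
    (Δ : Fin n → ℝ) (i : Fin n) : ℝ :=
  (n : ℝ)⁻¹ * (S i * resolv γ S Δ).trace

open Matrix

namespace Matrix

variable {m : Type*} [Fintype m] [DecidableEq m]

open scoped MatrixOrder in
lemma PosSemidef.exists_isHermitian_mul_self_eq {A : Matrix m m ℝ} (hA : A.PosSemidef) :
    ∃ R : Matrix m m ℝ, R.IsHermitian ∧ R * R = A :=
  ⟨CFC.sqrt A, (CFC.sqrt_nonneg A).posSemidef.isHermitian, CFC.sqrt_mul_sqrt_self A hA.nonneg⟩

lemma PosSemidef.trace_mul_nonneg {A B : Matrix m m ℝ} (hA : A.PosSemidef) (hB : B.PosSemidef) :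
    0 ≤ (A * B).trace := by
  obtain ⟨R, hR, rfl⟩ := hB.exists_isHermitian_mul_self_eq
  have h := (hA.conjTranspose_mul_mul_same R).trace_nonneg
  rwa [hR.eq, trace_mul_cycle, trace_mul_comm] at h

lemma PosSemidef.trace_mul_mul_mul_self_nonneg {A B X : Matrix m m ℝ} (hA : A.PosSemidef)
    (hB : B.PosSemidef) (hX : X.IsHermitian) : 0 ≤ (A * X * B * X).trace := by
  simpa only [hX.eq, Matrix.mul_assoc] using hA.trace_mul_nonneg (hB.conjTranspose_mul_mul_same X)

omit [DecidableEq m] in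
lemma trace_mul_smul_sum_mul {ι : Type*} [Fintype ι] (X Y : Matrix m m ℝ) (c : ℝ) (w : ι → ℝ)
    (S : ι → Matrix m m ℝ) :
    (X * (c • ∑ j, w j • S j) * Y).trace = c * ∑ j, w j * (X * S j * Y).trace := by
  simp only [Matrix.mul_smul, Matrix.smul_mul, Matrix.mul_sum, Matrix.sum_mul, trace_smul,
    trace_sum, smul_eq_mul]

omit [DecidableEq m] in
lemma trace_transpose_mul_sq_le (X Y : Matrix m m ℝ) :
    (Xᵀ * Y).trace ^ 2 ≤ (Xᵀ * X).trace * (Yᵀ * Y).trace := by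
  have h (X Y : Matrix m m ℝ) : (Xᵀ * Y).trace = ∑ k : m × m, X k.2 k.1 * Y k.2 k.1 := by
    simp [trace, mul_apply, Fintype.sum_prod_type]
  simpa only [h, sq] using Finset.sum_mul_sq_le_sq_mul_sq Finset.univ
    (fun k : m × m ↦ X k.2 k.1) (fun k ↦ Y k.2 k.1)

lemma abs_trace_mul_mul_mul_le {A B X Y : Matrix m m ℝ} (hA : A.PosSemidef) (hB : B.PosSemidef)
    (hX : X.IsHermitian) (hY : Y.IsHermitian) :
    |(A * X * B * Y).trace| ≤ √((A * X * B * X).trace * (A * Y * B * Y).trace) := by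
  obtain ⟨U, hU, rfl⟩ := hB.exists_isHermitian_mul_self_eq
  obtain ⟨V, hV, rfl⟩ := hA.exists_isHermitian_mul_self_eq
  have h (Z W : Matrix m m ℝ) (hZ : Z.IsHermitian) :
      ((U * Z * V)ᵀ * (U * W * V)).trace = (V * V * Z * (U * U) * W).trace := by
    rw [← conjTranspose_eq_transpose_of_trivial, conjTranspose_mul, conjTranspose_mul, hU.eq,
      hV.eq, hZ.eq]
    simp only [← Matrix.mul_assoc]
    rw [trace_mul_comm]
    simp only [← Matrix.mul_assoc]
  rw [← Real.sqrt_sq_eq_abs, ← h X Y hX, ← h X X hX, ← h Y Y hY]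
  exact Real.sqrt_le_sqrt (trace_transpose_mul_sq_le _ _)

variable {p : ℕ}

lemma dotProduct_mulVec_le_specNorm (M : Matrix (Fin p) (Fin p) ℝ) (x : Fin p → ℝ) :
    x ⬝ᵥ M *ᵥ x ≤ specNorm M * (x ⬝ᵥ x) := by
  set y := WithLp.toLp 2 x
  have hyy : ‖y‖ * ‖y‖ = x ⬝ᵥ x := by
    rw [← real_inner_self_eq_norm_mul_norm, EuclideanSpace.inner_toLp_toLp, star_trivial]
  calc x ⬝ᵥ M *ᵥ x = inner ℝ y (toEuclideanCLM (𝕜 := ℝ) M y) := (inner_toEuclideanCLM M y y).symm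
    _ ≤ ‖y‖ * ‖toEuclideanCLM (𝕜 := ℝ) M y‖ := real_inner_le_norm _ _
    _ ≤ ‖y‖ * (specNorm M * ‖y‖) := by gcongr; exact ContinuousLinearMap.le_opNorm _ _
    _ = specNorm M * (x ⬝ᵥ x) := by rw [← hyy]; ring

lemma IsHermitian.posSemidef_specNorm_smul_one_sub {M : Matrix (Fin p) (Fin p) ℝ}
    (hM : M.IsHermitian) : (specNorm M • 1 - M).PosSemidef := by
  refine .of_dotProduct_mulVec_nonneg ((isHermitian_one.smul (.all _)).sub hM) fun x ↦ ?_
  simp only [star_trivial, sub_mulVec, smul_mulVec, one_mulVec, dotProduct_sub, dotProduct_smul,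
    smul_eq_mul, sub_nonneg]
  exact dotProduct_mulVec_le_specNorm M x

lemma PosSemidef.trace_mul_conjTranspose_mul_mul_le {S M : Matrix (Fin p) (Fin p) ℝ}
    (hS : S.PosSemidef) (hM : M.IsHermitian) (R : Matrix (Fin p) (Fin p) ℝ) :
    (S * (Rᴴ * M * R)).trace ≤ specNorm M * (S * (Rᴴ * R)).trace := by
  have h := hS.trace_mul_nonneg (hM.posSemidef_specNorm_smul_one_sub.conjTranspose_mul_mul_same R)
  simp only [Matrix.mul_sub, Matrix.sub_mul, Matrix.mul_smul, Matrix.smul_mul, Matrix.mul_one,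
    trace_sub, trace_smul, smul_eq_mul, sub_nonneg] at h
  exact h

end Matrix

lemma abs_sum_sub_mul_le {ι : Type*} [Fintype ι] {x y a b t : ι → ℝ} {ε : ℝ}
    (hx : ∀ j, 0 ≤ x j) (hy : ∀ j, 0 ≤ y j) (ha : ∀ j, 0 ≤ a j) (hb : ∀ j, 0 ≤ b j)
    (hε : 0 ≤ ε) (hxy : ∀ j, |x j - y j| ≤ ε * √(x j * y j)) (ht : ∀ j, |t j| ≤ √(a j * b j)) :
    |∑ j, (y j - x j) * t j| ≤ ε * (√(∑ j, x j * a j) * √(∑ j, y j * b j)) := by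
  have hsplit (j : ι) : √(x j * y j) * √(a j * b j) = √(x j * a j) * √(y j * b j) := by
    rw [← Real.sqrt_mul (mul_nonneg (hx j) (hy j)), ← Real.sqrt_mul (mul_nonneg (hx j) (ha j))]
    ring_nf
  calc |∑ j, (y j - x j) * t j| ≤ ∑ j, |x j - y j| * |t j| := by
        refine (Finset.abs_sum_le_sum_abs _ _).trans_eq (Finset.sum_congr rfl fun j _ ↦ ?_)
        rw [abs_mul, abs_sub_comm]
    _ ≤ ∑ j, ε * √(x j * y j) * √(a j * b j) := by gcongr with j; exacts [hxy j, ht j]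
    _ = ε * ∑ j, √(x j * a j) * √(y j * b j) := by simp only [Finset.mul_sum, mul_assoc, hsplit]
    _ ≤ ε * (√(∑ j, x j * a j) * √(∑ j, y j * b j)) := by
        gcongr
        exact Real.sum_sqrt_mul_sqrt_le _ (fun j ↦ mul_nonneg (hx j) (ha j))
          fun j ↦ mul_nonneg (hy j) (hb j)

section Resolvent

variable {p n : ℕ} {γ : ℝ} {S : Fin n → Matrix (Fin p) (Fin p) ℝ} {Δ Δ' : Fin n → ℝ}

noncomputable def resolvInv (γ : ℝ) (S : Fin n → Matrix (Fin p) (Fin p) ℝ) (Δ : Fin n → ℝ) :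
    Matrix (Fin p) (Fin p) ℝ :=
  (n : ℝ)⁻¹ • ∑ j, Δ j • S j + γ • 1

lemma resolvInv_posDef (hγ : 0 < γ) (hS : ∀ j, (S j).PosSemidef) (hΔ : ∀ j, 0 ≤ Δ j) :
    (resolvInv γ S Δ).PosDef :=
  PosDef.posSemidef_add
    ((posSemidef_sum _ fun j _ ↦ (hS j).smul (hΔ j)).smul (inv_nonneg.2 n.cast_nonneg))
    (PosDef.one.smul hγ)

lemma resolv_posDef (hγ : 0 < γ) (hS : ∀ j, (S j).PosSemidef) (hΔ : ∀ j, 0 ≤ Δ j) :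
    (resolv γ S Δ).PosDef :=
  (resolvInv_posDef hγ hS hΔ).inv

lemma resolv_mul_resolvInv (hγ : 0 < γ) (hS : ∀ j, (S j).PosSemidef) (hΔ : ∀ j, 0 ≤ Δ j) :
    resolv γ S Δ * resolvInv γ S Δ = 1 :=
  nonsing_inv_mul _ ((isUnit_iff_isUnit_det _).mp (resolvInv_posDef hγ hS hΔ).isUnit)

lemma Ifun_sub_Ifun (hγ : 0 < γ) (hS : ∀ j, (S j).PosSemidef) (hΔ : ∀ j, 0 ≤ Δ j)
    (hΔ' : ∀ j, 0 ≤ Δ' j) (i : Fin n) :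
    Ifun γ S Δ i - Ifun γ S Δ' i = (n : ℝ)⁻¹ * ((n : ℝ)⁻¹ *
      ∑ j, (Δ' j - Δ j) * (S i * resolv γ S Δ * S j * resolv γ S Δ').trace) := by
  have hunit (Δ : Fin n → ℝ) (hΔ : ∀ j, 0 ≤ Δ j) : IsUnit (resolvInv γ S Δ) :=
    (resolvInv_posDef hγ hS hΔ).isUnit
  have hres : resolv γ S Δ - resolv γ S Δ' =
      resolv γ S Δ * (resolvInv γ S Δ' - resolvInv γ S Δ) * resolv γ S Δ' :=
    inv_sub_inv (iff_of_true (hunit Δ hΔ) (hunit Δ' hΔ'))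
  have hdiff : resolvInv γ S Δ' - resolvInv γ S Δ = (n : ℝ)⁻¹ • ∑ j, (Δ' j - Δ j) • S j := by
    simp only [resolvInv, sub_smul, Finset.sum_sub_distrib, smul_sub]
    abel
  rw [Ifun, Ifun, ← mul_sub, ← trace_sub, ← Matrix.mul_sub, hres, hdiff]
  simp only [← Matrix.mul_assoc]
  rw [trace_mul_smul_sum_mul]

lemma Ifun_nonneg (hγ : 0 < γ) (hS : ∀ j, (S j).PosSemidef) (hΔ : ∀ j, 0 ≤ Δ j) (i : Fin n) :
    0 ≤ Ifun γ S Δ i :=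
  mul_nonneg (inv_nonneg.2 n.cast_nonneg)
    ((hS i).trace_mul_nonneg (resolv_posDef hγ hS hΔ).posSemidef)

lemma trace_mul_resolv_eq (i : Fin n) : (S i * resolv γ S Δ).trace = n * Ifun γ S Δ i := by
  have : (n : ℝ) ≠ 0 := by have := i.pos; positivity
  rw [Ifun, mul_inv_cancel_left₀ this]

lemma sum_mul_trace_resolv_le (hγ : 0 < γ) (hS : ∀ j, (S j).PosSemidef) (hΔ : ∀ j, 0 ≤ Δ j)
    (i : Fin n) :
    ∑ j, Δ j * (S i * resolv γ S Δ * S j * resolv γ S Δ).trace ≤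
      n ^ 2 * (specNorm (1 - γ • resolv γ S Δ) * Ifun γ S Δ i) := by
  have hn : (n : ℝ) ≠ 0 := by have := i.pos; positivity
  obtain ⟨R, hR, hRR⟩ := (resolv_posDef hγ hS hΔ).posSemidef.exists_isHermitian_mul_self_eq
  set Q := resolv γ S Δ
  have hsum : ∑ j, Δ j • S j = (n : ℝ) • (resolvInv γ S Δ - γ • 1) := by
    rw [resolvInv, add_sub_cancel_right, smul_inv_smul₀ hn]
  have hQAQ : Q * (resolvInv γ S Δ - γ • 1) * Q = Rᴴ * (1 - γ • Q) * R := by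
    rw [Matrix.mul_sub, resolv_mul_resolvInv hγ hS hΔ, hR.eq, ← hRR]
    simp only [Matrix.mul_sub, Matrix.sub_mul, Matrix.mul_smul, Matrix.smul_mul, Matrix.mul_one,
      Matrix.one_mul, Matrix.mul_assoc]
  have hbound := (hS i).trace_mul_conjTranspose_mul_mul_le
    (isHermitian_one.sub ((resolv_posDef hγ hS hΔ).isHermitian.smul (.all γ))) R
  rw [← hQAQ, hR.eq, hRR, trace_mul_resolv_eq] at hbound
  calc ∑ j, Δ j * (S i * Q * S j * Q).trace
        = n * (S i * (Q * (resolvInv γ S Δ - γ • 1) * Q)).trace := by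
        rw [← one_mul (∑ j, _), ← trace_mul_smul_sum_mul, one_smul, hsum]
        simp only [Matrix.mul_smul, Matrix.smul_mul, trace_smul, smul_eq_mul, Matrix.mul_assoc]
    _ ≤ n * (specNorm (1 - γ • Q) * (n * Ifun γ S Δ i)) := by gcongr
    _ = n ^ 2 * (specNorm (1 - γ • Q) * Ifun γ S Δ i) := by ring

lemma abs_Ifun_sub_Ifun_le (hγ : 0 < γ) (hS : ∀ j, (S j).PosSemidef) (hΔ : ∀ j, 0 ≤ Δ j)
    (hΔ' : ∀ j, 0 ≤ Δ' j) {ε c : ℝ} (hε : 0 ≤ ε)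
    (hΔΔ' : ∀ j, |Δ j - Δ' j| ≤ ε * √(Δ j * Δ' j))
    (hc : specNorm (1 - γ • resolv γ S Δ) ≤ c) (hc' : specNorm (1 - γ • resolv γ S Δ') ≤ c)
    (i : Fin n) :
    |Ifun γ S Δ i - Ifun γ S Δ' i| ≤ c * ε * √(Ifun γ S Δ i * Ifun γ S Δ' i) := by
  have hn : (0 : ℝ) < n := by have := i.pos; positivity
  have hc0 : 0 ≤ c := (norm_nonneg _).trans hc
  have hsqrt_sum {Δ : Fin n → ℝ} (hΔ : ∀ j, 0 ≤ Δ j) (hc : specNorm (1 - γ • resolv γ S Δ) ≤ c) :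
      √(∑ j, Δ j * (S i * resolv γ S Δ * S j * resolv γ S Δ).trace) ≤
        n * √(c * Ifun γ S Δ i) := by
    calc _ ≤ √(n ^ 2 * (c * Ifun γ S Δ i)) := by
          refine Real.sqrt_le_sqrt ((sum_mul_trace_resolv_le hγ hS hΔ i).trans ?_)
          gcongr
          exact Ifun_nonneg hγ hS hΔ i
      _ = n * √(c * Ifun γ S Δ i) := by rw [Real.sqrt_mul (sq_nonneg _), Real.sqrt_sq hn.le]
  have hsqrt_mul : √(c * Ifun γ S Δ i) * √(c * Ifun γ S Δ' i) =
      c * √(Ifun γ S Δ i * Ifun γ S Δ' i) := by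
    rw [← Real.sqrt_mul (mul_nonneg hc0 (Ifun_nonneg hγ hS hΔ i)),
      show c * Ifun γ S Δ i * (c * Ifun γ S Δ' i) = c ^ 2 * (Ifun γ S Δ i * Ifun γ S Δ' i) by ring,
      Real.sqrt_mul (sq_nonneg c), Real.sqrt_sq hc0]
  have hQ := (resolv_posDef hγ hS hΔ).posSemidef
  have hQ' := (resolv_posDef hγ hS hΔ').posSemidef
  have hCS := abs_sum_sub_mul_le hΔ hΔ'
    (fun j ↦ (hS i).trace_mul_mul_mul_self_nonneg (hS j) hQ.isHermitian)
    (fun j ↦ (hS i).trace_mul_mul_mul_self_nonneg (hS j) hQ'.isHermitian) hε hΔΔ'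
    (fun j ↦ abs_trace_mul_mul_mul_le (hS i) (hS j) hQ.isHermitian hQ'.isHermitian)
  calc |Ifun γ S Δ i - Ifun γ S Δ' i|
      = (n : ℝ)⁻¹ * ((n : ℝ)⁻¹ *
          |∑ j, (Δ' j - Δ j) * (S i * resolv γ S Δ * S j * resolv γ S Δ').trace|) := by
        rw [Ifun_sub_Ifun hγ hS hΔ hΔ', abs_mul, abs_mul, abs_inv, Nat.abs_cast]
    _ ≤ (n : ℝ)⁻¹ * ((n : ℝ)⁻¹ *
          (ε * ((n * √(c * Ifun γ S Δ i)) * (n * √(c * Ifun γ S Δ' i))))) := by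
        gcongr
        refine hCS.trans ?_
        gcongr
        exacts [hsqrt_sum hΔ hc, hsqrt_sum hΔ' hc']
    _ = c * ε * √(Ifun γ S Δ i * Ifun γ S Δ' i) := by
        rw [mul_mul_mul_comm, hsqrt_mul]
        field_simp

end Resolvent

theorem Ifun_contracting_general {p n : ℕ} (γ : ℝ) (hγ : 0 < γ)
    (S : Fin n → Matrix (Fin p) (Fin p) ℝ) (hS : ∀ i, (S i).PosSemidef)
    (Δ Δ' : Fin n → ℝ) (hΔ : ∀ i, 0 < Δ i) (hΔ' : ∀ i, 0 < Δ' i) :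
    (⨆ i, |Ifun γ S Δ i - Ifun γ S Δ' i| /
        Real.sqrt (Ifun γ S Δ i * Ifun γ S Δ' i)) ≤
      max (specNorm (1 - γ • resolv γ S Δ)) (specNorm (1 - γ • resolv γ S Δ')) *
        ⨆ j, |Δ j - Δ' j| / Real.sqrt (Δ j * Δ' j) := by
  set c := max (specNorm (1 - γ • resolv γ S Δ)) (specNorm (1 - γ • resolv γ S Δ'))
  set ε := ⨆ j, |Δ j - Δ' j| / √(Δ j * Δ' j)
  have hc : 0 ≤ c := (norm_nonneg _).trans (le_max_left _ _)
  have hε : 0 ≤ ε := Real.iSup_nonneg fun j ↦ by positivity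
  have hΔΔ' (j : Fin n) : |Δ j - Δ' j| ≤ ε * √(Δ j * Δ' j) := by
    have := mul_pos (hΔ j) (hΔ' j)
    exact (div_le_iff₀ (by positivity)).1
      (le_ciSup (f := fun j ↦ |Δ j - Δ' j| / √(Δ j * Δ' j)) (Set.finite_range _).bddAbove j)
  refine Real.iSup_le (fun i ↦ div_le_of_le_mul₀ (Real.sqrt_nonneg _) (mul_nonneg hc hε) ?_)
    (mul_nonneg hc hε)
  exact abs_Ifun_sub_Ifun_le hγ hS (fun j ↦ (hΔ j).le) (fun j ↦ (hΔ' j).le) hε hΔΔ'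
    (le_max_left _ _) (le_max_right _ _) i

theorem Ifun_contracting {p n : ℕ} (hn : 0 < n) (γ : ℝ) (hγ : 0 < γ)
    (S : Fin n → Matrix (Fin p) (Fin p) ℝ) (hS : ∀ i, (S i).PosSemidef)
    (Δ Δ' : Fin n → ℝ) (hΔ : ∀ i, 0 < Δ i) (hΔ' : ∀ i, 0 < Δ' i)
    (hI : ∀ i, 0 < Ifun γ S Δ i) (hI' : ∀ i, 0 < Ifun γ S Δ' i) :
    (⨆ i, |Ifun γ S Δ i - Ifun γ S Δ' i| /
        Real.sqrt (Ifun γ S Δ i * Ifun γ S Δ' i)) ≤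
      max (specNorm (1 - γ • resolv γ S Δ)) (specNorm (1 - γ • resolv γ S Δ')) *
        ⨆ j, |Δ j - Δ' j| / Real.sqrt (Δ j * Δ' j) :=
  Ifun_contracting_general γ hγ S hS Δ Δ' hΔ hΔ'
end
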